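/- arXiv:2504.14674 — 2 statements merged into one kernel-verified Lean document; each statement's English description precedes it below -/
import Mathlib

section
/- Let m = 2h + 1 ≥ 5 be odd. Then for every x ∈ 𝔽_{2^m}, Tr((x+1) + (x+1)^3 + (x+1)^{2^{(m+1)/2} + 1}) = Tr(x^{2^h + 1} + x^3 + x) + 1. -/
/-!
In characteristic 2, `(x + 1) ^ 2 ^ (h + 1) = x ^ 2 ^ (h + 1) + 1`, so the left-hand argument
expands to `x ^ 3 + x ^ (2 ^ (h + 1) + 1) + x ^ 2 + x ^ 2 ^ (h + 1) + x + 1`. The trace is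
invariant under Frobenius, so `x ^ 2` and `x ^ 2 ^ (h + 1)` have the trace of `x`, and
`x ^ (2 ^ (h + 1) + 1) = (x ^ (2 ^ h + 1)) ^ 2 ^ (h + 1)` since `x ^ 2 ^ m = x`.
Finally `Tr 1 = m = 1` in `𝔽₂`.
-/

theorem Algebra.trace_pow_card_pow {K L : Type*} [Field K] [Fintype K] [Field L] [Algebra K L]
    [Algebra.IsAlgebraic K L] (n : ℕ) (y : L) :
    Algebra.trace K L (y ^ Fintype.card K ^ n) = Algebra.trace K L y := by
  have := Algebra.trace_eq_of_algEquiv (FiniteField.frobeniusAlgEquivOfAlgebraic K L ^ n) y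
  rwa [AlgEquiv.coe_pow, FiniteField.coe_frobeniusAlgEquivOfAlgebraic_iterate] at this

namespace GaloisField

variable {p : ℕ} [Fact p.Prime] {n : ℕ}

theorem trace_pow_prime_pow (k : ℕ) (y : GaloisField p n) :
    Algebra.trace (ZMod p) (GaloisField p n) (y ^ p ^ k) = Algebra.trace (ZMod p) _ y := by
  simpa using Algebra.trace_pow_card_pow (K := ZMod p) k y

theorem pow_prime_pow_self (hn : n ≠ 0) (y : GaloisField p n) : y ^ p ^ n = y := by
  have := Fintype.ofFinite (GaloisField p n)
  rw [← Nat.card_eq_fintype_card.symm.trans (card p n hn)]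
  exact FiniteField.pow_card y

theorem trace_one (hn : n ≠ 0) :
    Algebra.trace (ZMod p) (GaloisField p n) 1 = n := by
  simpa [finrank p hn] using Algebra.trace_algebraMap (S := GaloisField p n) (1 : ZMod p)

theorem trace_pow_prime_pow_succ_add_one (h : ℕ) (y : GaloisField p (2 * h + 1)) :
    Algebra.trace (ZMod p) _ (y ^ (p ^ (h + 1) + 1)) =
      Algebra.trace (ZMod p) _ (y ^ (p ^ h + 1)) := by
  have hy : (y ^ (p ^ h + 1)) ^ p ^ (h + 1) = y ^ (p ^ (h + 1) + 1) := by
    rw [← pow_mul, show (p ^ h + 1) * p ^ (h + 1) = p ^ (2 * h + 1) + p ^ (h + 1) by ring,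
      pow_add, pow_prime_pow_self (by omega), ← pow_succ']
  rw [← hy, trace_pow_prime_pow]

end GaloisField

theorem stmt4_general (m h : ℕ) (hm : m = 2 * h + 1) (x : GaloisField 2 m) :
    Algebra.trace (ZMod 2) (GaloisField 2 m)
        ((x + 1) + (x + 1) ^ 3 + (x + 1) ^ (2 ^ ((m + 1) / 2) + 1)) =
      Algebra.trace (ZMod 2) (GaloisField 2 m)
          (x ^ (2 ^ h + 1) + x ^ 3 + x) + 1 := by
  subst hm
  have hfrob : (x + 1) ^ 2 ^ (h + 1) = x ^ 2 ^ (h + 1) + 1 := by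
    simpa using add_pow_char_pow (p := 2) (n := h + 1) x (1 : GaloisField 2 (2 * h + 1))
  have hexpand : (x + 1) + (x + 1) ^ 3 + (x + 1) ^ (2 ^ (h + 1) + 1) =
      x ^ 3 + x ^ (2 ^ (h + 1) + 1) + (x ^ 2 ^ 1 + x ^ 2 ^ (h + 1) + x) + 1 := by
    rw [pow_succ _ (2 ^ (h + 1)), hfrob]
    linear_combination (x ^ 2 + 2 * x + 1) * CharTwo.two_eq_zero (R := GaloisField 2 (2 * h + 1))
  rw [show (2 * h + 1 + 1) / 2 = h + 1 by omega, hexpand]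
  simp only [map_add, GaloisField.trace_pow_prime_pow_succ_add_one,
    GaloisField.trace_pow_prime_pow, GaloisField.trace_one (Nat.succ_ne_zero _)]
  push_cast
  linear_combination (Algebra.trace (ZMod 2) _ x + h) * CharTwo.two_eq_zero (R := ZMod 2)

/-- Let m = 2h + 1 ≥ 5 be odd. Then for every x ∈ 𝔽_{2^m},
Tr((x+1) + (x+1)^3 + (x+1)^{2^{(m+1)/2}+1}) = Tr(x^{2^h+1} + x^3 + x) + 1. -/
theorem stmt4 (m h : ℕ) (hm : m = 2 * h + 1) (hm5 : 5 ≤ m) (x : GaloisField 2 m) :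
    Algebra.trace (ZMod 2) (GaloisField 2 m)
        ((x + 1) + (x + 1) ^ 3 + (x + 1) ^ (2 ^ ((m + 1) / 2) + 1)) =
      Algebra.trace (ZMod 2) (GaloisField 2 m)
          (x ^ (2 ^ h + 1) + x ^ 3 + x) + 1 :=
  stmt4_general m h hm x
end

section
/- Let m = 2h + 1 ≥ 5 be odd. For any j ∈ Γ_(h) (that is, j odd with 1 ≤ j ≤ 2^h − 1), the 2-cyclotomic cosets modulo 2^m − 1 satisfy: (i) if j ≠ 1 then j + 2^{h+1} is the coset leader of C_{j+2^{h+1}}, while the coset leader of C_{1+2^{h+1}} is 1 + 2^h; (ii) |C_{j+2^{h+1}}| = m. -/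
/-- The 2-cyclotomic coset of i modulo v:
    C_i = {i·2^s mod v : s = 0, 1, 2, …} ⊆ Z_v. -/
def cosetC (v i : ℕ) : Set ℕ := {x | ∃ s : ℕ, x = i * 2 ^ s % v}

/-!
Modulo `2^m - 1`, multiplication by `2^s` cyclically rotates the `m`-bit binary expansion, so
`C_x` is the orbit of `x` under the doubling map and `|C_x|` is the minimal period of `x`.
The expansion of `x = j + 2^(h+1)` is `j` in the low `h` bits and a single bit at position
`h + 1`. Rotating by `h` gives `j·2^h + 1`; every other nontrivial rotation is larger than `x`:
for `s < h` nothing wraps around, and for `s > h` the lowest bit of the odd number `j` lands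
at position `s ≥ h + 1`. Hence `x` is fixed by no nontrivial rotation, and the coset leader is
`x` when `j ≥ 3` and `2^h + 1` when `j = 1`.
-/

open Function

theorem Function.IsPeriodicPt.minimalPeriod_eq {α : Type*} {f : α → α} {x : α} {n : ℕ}
    (hper : IsPeriodicPt f n x) (hn : 0 < n) (hne : ∀ k, 0 < k → k < n → f^[k] x ≠ x) :
    minimalPeriod f x = n := by
  refine (hper.minimalPeriod_le hn).antisymm (not_lt.mp fun hlt => ?_)
  exact hne _ (hper.minimalPeriod_pos hn) hlt (isPeriodicPt_minimalPeriod f x)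

theorem Function.ncard_range_iterate {α : Type*} {f : α → α} {x : α}
    (hx : x ∈ periodicPts f) :
    (Set.range (f^[·] x)).ncard = minimalPeriod f x := by
  have hrange : Set.range (f^[·] x) = (f^[·] x) '' Set.Iio (minimalPeriod f x) := by
    refine (Set.image_subset_range _ _).antisymm' ?_
    rintro _ ⟨n, rfl⟩
    exact ⟨n % _, Nat.mod_lt _ (minimalPeriod_pos_of_mem_periodicPts hx),
      iterate_mod_minimalPeriod_eq⟩
  rw [hrange, iterate_injOn_Iio_minimalPeriod.ncard_image, Set.ncard_Iio_nat]

def doubleMod (v y : ℕ) : ℕ := 2 * y % v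

theorem doubleMod_iterate {v x : ℕ} (hx : x < v) (s : ℕ) :
    (doubleMod v)^[s] x = x * 2 ^ s % v := by
  induction s with
  | zero => simp [Nat.mod_eq_of_lt hx]
  | succ s ih => rw [iterate_succ_apply', ih, doubleMod, Nat.mul_mod_mod, pow_succ]; ring_nf

theorem cosetC_eq_range_iterate {v x : ℕ} (hx : x < v) :
    cosetC v x = Set.range ((doubleMod v)^[·] x) := by
  ext y
  simp [cosetC, doubleMod_iterate hx, eq_comm]

section Mersenne

variable {m x : ℕ}

theorem mul_two_pow_mod_two_pow_sub_one {s : ℕ} (hx : x < 2 ^ m - 1) (hs : s ≤ m) :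
    x * 2 ^ s % (2 ^ m - 1) = x % 2 ^ (m - s) * 2 ^ s + x / 2 ^ (m - s) := by
  obtain ⟨r, rfl⟩ : ∃ r, m = r + s := ⟨m - s, by omega⟩
  rw [Nat.add_sub_cancel, pow_add] at *
  have hq : x / 2 ^ r < 2 ^ s := Nat.div_lt_of_lt_mul (by omega)
  have hb : x % 2 ^ r < 2 ^ r := Nat.mod_lt _ (by positivity)
  have hAB : 1 ≤ 2 ^ r * 2 ^ s := Nat.one_le_iff_ne_zero.mpr (by positivity)
  have hx' := Nat.div_add_mod x (2 ^ r)
  generalize x / 2 ^ r = q at *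
  generalize x % 2 ^ r = b at *
  generalize 2 ^ r = A at *
  generalize 2 ^ s = B at *
  subst hx'
  have hsplit : (A * q + b) * B = q * (A * B - 1) + (b * B + q) := by
    zify [hAB]; ring
  rw [hsplit, Nat.mul_add_mod_self_right, Nat.mod_eq_of_lt]
  -- `b * B + q = A * B - 1` would force `b = A - 1` and `q = B - 1`, i.e. `x = 2 ^ m - 1`.
  zify [hAB] at hx ⊢
  nlinarith

theorem isPeriodicPt_doubleMod (hx : x < 2 ^ m - 1) : IsPeriodicPt (doubleMod (2 ^ m - 1)) m x := by
  simp [IsPeriodicPt, IsFixedPt, doubleMod_iterate hx, mul_two_pow_mod_two_pow_sub_one hx le_rfl,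
    Nat.mod_one]

theorem exists_lt_of_mem_cosetC {y : ℕ} (hx : x < 2 ^ m - 1) (hy : y ∈ cosetC (2 ^ m - 1) x) :
    ∃ s < m, y = x * 2 ^ s % (2 ^ m - 1) := by
  have hm : 0 < m := Nat.pos_of_ne_zero (by rintro rfl; simp at hx)
  rw [cosetC_eq_range_iterate hx] at hy
  obtain ⟨s, rfl⟩ := hy
  refine ⟨s % m, Nat.mod_lt _ hm, ?_⟩
  beta_reduce
  rw [← (isPeriodicPt_doubleMod hx).iterate_mod_apply, doubleMod_iterate hx]

theorem ncard_cosetC_two_pow_sub_one (hx : x < 2 ^ m - 1)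
    (hne : ∀ s, 0 < s → s < m → x * 2 ^ s % (2 ^ m - 1) ≠ x) :
    (cosetC (2 ^ m - 1) x).ncard = m := by
  have hm : 0 < m := Nat.pos_of_ne_zero (by rintro rfl; simp at hx)
  have hper := isPeriodicPt_doubleMod hx
  rw [cosetC_eq_range_iterate hx, ncard_range_iterate (mk_mem_periodicPts hm hper)]
  exact hper.minimalPeriod_eq hm fun s hs0 hsm => by
    rw [doubleMod_iterate hx]; exact hne s hs0 hsm

end Mersenne

section

variable {h j : ℕ}

theorem add_two_pow_succ_lt (hj : Odd j) (hjh : j < 2 ^ h) :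
    j + 2 ^ (h + 1) < 2 ^ (2 * h + 1) - 1 := by
  have h2 : 2 ≤ 2 ^ h := by have := hj.pos; omega
  rw [pow_succ, show 2 * h + 1 = h + h + 1 by ring, pow_succ, pow_add]
  have := Nat.mul_le_mul_left (2 ^ h) h2
  omega

theorem add_two_pow_succ_mul_two_pow_mod (hj : Odd j) (hjh : j < 2 ^ h) :
    (j + 2 ^ (h + 1)) * 2 ^ h % (2 ^ (2 * h + 1) - 1) = j * 2 ^ h + 1 := by
  rw [mul_two_pow_mod_two_pow_sub_one (add_two_pow_succ_lt hj hjh) (by omega),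
    show 2 * h + 1 - h = h + 1 by omega, Nat.add_mod_right, Nat.add_div_right _ (by positivity),
    Nat.mod_eq_of_lt (hjh.trans (Nat.pow_lt_pow_right one_lt_two h.lt_succ_self)),
    Nat.div_eq_of_lt (hjh.trans (Nat.pow_lt_pow_right one_lt_two h.lt_succ_self))]

theorem add_two_pow_succ_lt_mul_two_pow_mod {s : ℕ} (hj : Odd j) (hjh : j < 2 ^ h)
    (hs0 : 0 < s) (hsm : s < 2 * h + 1) (hsh : s ≠ h) :
    j + 2 ^ (h + 1) < (j + 2 ^ (h + 1)) * 2 ^ s % (2 ^ (2 * h + 1) - 1) := by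
  rw [mul_two_pow_mod_two_pow_sub_one (add_two_pow_succ_lt hj hjh) hsm.le]
  set x := j + 2 ^ (h + 1) with hx
  have hx4 : x < 2 ^ (h + 2) := by rw [pow_succ, pow_succ] at *; omega
  rcases lt_trichotomy s (h + 1) with hlt | rfl | hgt
  · rw [Nat.mod_eq_of_lt (hx4.trans_le (Nat.pow_le_pow_right two_pos (by omega)))]
    calc x < x * 2 := by omega
      _ ≤ x * 2 ^ s := Nat.mul_le_mul_left x (Nat.le_self_pow hs0.ne' 2)
      _ ≤ _ := Nat.le_add_right _ _
  · rw [hx, show 2 * h + 1 - (h + 1) = h by omega, pow_succ 2 h, ← mul_assoc,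
      Nat.add_mul_mod_self_left, Nat.add_mul_div_left _ _ (by positivity), Nat.mod_eq_of_lt hjh,
      Nat.div_eq_of_lt hjh]
    have : 2 ^ h * 2 ≤ j * (2 ^ h * 2) := Nat.le_mul_of_pos_left _ hj.pos
    nlinarith
  · have hmod : 0 < x % 2 ^ (2 * h + 1 - s) := by
      have hodd : x % 2 = 1 :=
        Nat.odd_iff.mp (hj.add_even (Nat.even_pow.mpr ⟨even_two, by omega⟩))
      have : x % 2 ^ (2 * h + 1 - s) % 2 = 1 := by
        rwa [Nat.mod_mod_of_dvd _ (dvd_pow_self 2 (by omega))]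
      omega
    calc x < 2 ^ s := hx4.trans_le (Nat.pow_le_pow_right two_pos hgt)
      _ ≤ x % 2 ^ (2 * h + 1 - s) * 2 ^ s := Nat.le_mul_of_pos_left _ hmod
      _ ≤ _ := Nat.le_add_right _ _

theorem add_two_pow_succ_lt_mul_two_pow_add_one (hj : 3 ≤ j) (hjh : j < 2 ^ h) :
    j + 2 ^ (h + 1) < j * 2 ^ h + 1 := by
  have := Nat.mul_le_mul_right (2 ^ h) hj
  rw [pow_succ]; omega

theorem mem_cosetC_add_two_pow_succ {y : ℕ} (hj : Odd j) (hjh : j < 2 ^ h)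
    (hy : y ∈ cosetC (2 ^ (2 * h + 1) - 1) (j + 2 ^ (h + 1))) :
    j + 2 ^ (h + 1) ≤ y ∨ y = j * 2 ^ h + 1 := by
  obtain ⟨s, hsm, rfl⟩ := exists_lt_of_mem_cosetC (add_two_pow_succ_lt hj hjh) hy
  rcases Nat.eq_zero_or_pos s with rfl | hs0
  · simp [Nat.mod_eq_of_lt (add_two_pow_succ_lt hj hjh)]
  · by_cases hsh : s = h
    · subst hsh
      exact .inr (add_two_pow_succ_mul_two_pow_mod hj hjh)
    · exact .inl (add_two_pow_succ_lt_mul_two_pow_mod hj hjh hs0 hsm hsh).le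

end

theorem stmt11_general (m h : ℕ) (hm : m = 2 * h + 1)
    (j : ℕ) (hjodd : Odd j) (hj2 : j ≤ 2 ^ h - 1) :
    (j ≠ 1 → IsLeast (cosetC (2 ^ m - 1) (j + 2 ^ (h + 1))) (j + 2 ^ (h + 1))) ∧
    IsLeast (cosetC (2 ^ m - 1) (1 + 2 ^ (h + 1))) (1 + 2 ^ h) ∧
    (cosetC (2 ^ m - 1) (j + 2 ^ (h + 1))).ncard = m := by
  subst hm
  have hjh : j < 2 ^ h := by have := Nat.one_le_two_pow (n := h); omega
  have h1h : 1 < 2 ^ h := lt_of_le_of_lt hjodd.pos hjh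
  have hx := add_two_pow_succ_lt hjodd hjh
  have hj3 : j ≠ 1 → 3 ≤ j := fun hj1 => by obtain ⟨k, rfl⟩ := hjodd; omega
  refine ⟨fun hj1 => ⟨⟨0, by simp [Nat.mod_eq_of_lt hx]⟩, fun y hy => ?_⟩,
    ⟨⟨h, ?_⟩, fun y hy => ?_⟩, ?_⟩
  · rcases mem_cosetC_add_two_pow_succ hjodd hjh hy with hle | rfl
    · exact hle
    · exact (add_two_pow_succ_lt_mul_two_pow_add_one (hj3 hj1) hjh).le
  · rw [add_two_pow_succ_mul_two_pow_mod odd_one h1h, one_mul, add_comm]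
  · rcases mem_cosetC_add_two_pow_succ odd_one h1h hy with hle | rfl
    · rw [pow_succ] at hle; omega
    · omega
  · refine ncard_cosetC_two_pow_sub_one hx fun s hs0 hsm => ?_
    by_cases hsh : s = h
    · subst hsh
      rw [add_two_pow_succ_mul_two_pow_mod hjodd hjh]
      by_cases hj1 : j = 1
      · subst hj1; rw [pow_succ]; omega
      · exact (add_two_pow_succ_lt_mul_two_pow_add_one (hj3 hj1) hjh).ne'
    · exact (add_two_pow_succ_lt_mul_two_pow_mod hjodd hjh hs0 hsm hsh).ne'

/-- Let m = 2h+1 ≥ 5 be odd. For any odd j with 1 ≤ j ≤ 2^h − 1 (j ∈ Γ_(h)),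
for cosets modulo 2^m − 1: (i) if j ≠ 1 then j + 2^{h+1} is the coset leader
(least element) of C_{j+2^{h+1}}, while the coset leader of C_{1+2^{h+1}} is
1 + 2^h; (ii) |C_{j+2^{h+1}}| = m. -/
theorem stmt11 (m h : ℕ) (hm : m = 2 * h + 1) (hm5 : 5 ≤ m)
    (j : ℕ) (hjodd : Odd j) (hj1 : 1 ≤ j) (hj2 : j ≤ 2 ^ h - 1) :
    (j ≠ 1 → IsLeast (cosetC (2 ^ m - 1) (j + 2 ^ (h + 1))) (j + 2 ^ (h + 1))) ∧
    IsLeast (cosetC (2 ^ m - 1) (1 + 2 ^ (h + 1))) (1 + 2 ^ h) ∧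
    (cosetC (2 ^ m - 1) (j + 2 ^ (h + 1))).ncard = m :=
  stmt11_general m h hm j hjodd hj2
end
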